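/- arXiv:1903.01661 — 4 statements merged into one kernel-verified Lean document; each statement's English description precedes it below -/
import Mathlib

section
/- Let {a_i} be i.i.d. real-valued random variables with partial sums S_n = a_1 + ... + a_n. Suppose the moment generating function M(r) = E[exp(r·a_1)] satisfies M(q) ≤ 1 for some q > 0. Then for any h ≥ 0, P(sup_{n≥1} S_n > h) ≤ exp(−q·h). -/
open MeasureTheory ProbabilityTheory Real
open scoped ENNReal

/-!
`X n = exp (q S n)` is a nonnegative supermartingale, because each factor `exp (q a n)` is
independent of the past and has mean at most `1`. Let `C n` be the event that the walk has not
exceeded `h` by time `n`. Leaving `C` at time `n + 1` forces `X (n + 1) ≥ exp (q h)`, so the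
quantity `exp (q h) μ (C n)ᶜ + ∫⁻ in C n, X n` does not increase with `n` (optional stopping
at the exit time from `C`); it starts at `1`, whence `μ (C n)ᶜ ≤ exp (-q h)`, and `(C n)ᶜ`
increases to the event in question.
-/

theorem mul_measure_compl_add_setLIntegral_le {Ω : Type*} [MeasurableSpace Ω] {μ : Measure Ω}
    {C : ℕ → Set Ω} {X : ℕ → Ω → ℝ≥0∞} {c : ℝ≥0∞}
    (hC : Antitone C) (hCm : ∀ n, MeasurableSet (C n))
    (hstep : ∀ n, ∫⁻ ω in C n, X (n + 1) ω ∂μ ≤ ∫⁻ ω in C n, X n ω ∂μ)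
    (hexit : ∀ n, ∀ ω ∈ C n \ C (n + 1), c ≤ X (n + 1) ω) (N : ℕ) :
    c * μ (C N)ᶜ + ∫⁻ ω in C N, X N ω ∂μ ≤ c * μ (C 0)ᶜ + ∫⁻ ω in C 0, X 0 ω ∂μ := by
  induction N with
  | zero => rfl
  | succ N ih =>
    set B := C N \ C (N + 1)
    have hB : MeasurableSet B := (hCm N).diff (hCm (N + 1))
    have hcompl : μ (C (N + 1))ᶜ = μ (C N)ᶜ + μ B := by
      rw [← measure_union (disjoint_compl_left.mono_right Set.sdiff_subset) hB]
      congr 1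
      ext ω
      simp only [Set.mem_compl_iff, Set.mem_union, Set.mem_sdiff]
      have := @hC N (N + 1) N.le_succ ω
      tauto
    have hsplit : ∫⁻ ω in C N, X (N + 1) ω ∂μ
        = ∫⁻ ω in C (N + 1), X (N + 1) ω ∂μ + ∫⁻ ω in B, X (N + 1) ω ∂μ := by
      rw [← lintegral_union hB Set.disjoint_sdiff_right, Set.union_sdiff_cancel (hC N.le_succ)]
    have hexitB : c * μ B ≤ ∫⁻ ω in B, X (N + 1) ω ∂μ := by
      rw [← setLIntegral_const]
      exact setLIntegral_mono' hB (hexit N)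
    calc c * μ (C (N + 1))ᶜ + ∫⁻ ω in C (N + 1), X (N + 1) ω ∂μ
        = c * μ (C N)ᶜ + (c * μ B + ∫⁻ ω in C (N + 1), X (N + 1) ω ∂μ) := by
          rw [hcompl, mul_add, add_assoc]
      _ ≤ c * μ (C N)ᶜ + ∫⁻ ω in C N, X (N + 1) ω ∂μ := by
          rw [hsplit, add_comm (∫⁻ ω in C (N + 1), _ ∂μ)]
          gcongr
      _ ≤ c * μ (C N)ᶜ + ∫⁻ ω in C N, X N ω ∂μ := add_le_add_right (hstep N) _
      _ ≤ _ := ih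

theorem measurable_iSup_lt_comap_sum_range {Ω E : Type*} [MeasurableSpace E] [AddCommMonoid E]
    [MeasurableAdd₂ E] (f : ℕ → Ω → E) {k n : ℕ} (hk : k ≤ n) :
    Measurable[⨆ i < n, MeasurableSpace.comap (f i) ‹_›] fun ω => ∑ i ∈ Finset.range k, f i ω :=
  Finset.measurable_sum _ fun i hi => measurable_iff_comap_le.2 <|
    le_iSup₂ (f := fun i (_ : i < n) => MeasurableSpace.comap (f i) ‹_›) i
      ((Finset.mem_range.1 hi).trans_le hk)

section

variable {Ω : Type*} [MeasurableSpace Ω] {μ : Measure Ω}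

theorem ProbabilityTheory.iIndepFun.indep_iSup_lt_comap {β : Type*} [mβ : MeasurableSpace β]
    {f : ℕ → Ω → β} (hf : ∀ i, Measurable (f i)) (hindep : iIndepFun f μ) (n : ℕ) :
    Indep (⨆ i < n, mβ.comap (f i)) (mβ.comap (f n)) μ := by
  have := indep_iSup_of_disjoint (fun i => (hf i).comap_le) ((iIndepFun_iff_iIndep _ _ _).1 hindep)
    (S := Set.Iio n) (T := {n}) (by simp)
  simpa using this

theorem setLIntegral_exp_sum_range_succ_le {a : ℕ → Ω → ℝ} (hmeas : ∀ i, Measurable (a i))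
    (hindep : iIndepFun a μ) {q : ℝ} {n : ℕ}
    (hM : ∫⁻ ω, ENNReal.ofReal (exp (q * a n ω)) ∂μ ≤ 1) {s : Set Ω}
    (hs : MeasurableSet[⨆ i < n, MeasurableSpace.comap (a i) inferInstance] s) :
    ∫⁻ ω in s, ENNReal.ofReal (exp (q * ∑ i ∈ Finset.range (n + 1), a i ω)) ∂μ
      ≤ ∫⁻ ω in s, ENNReal.ofReal (exp (q * ∑ i ∈ Finset.range n, a i ω)) ∂μ := by
  have hle : ⨆ i < n, MeasurableSpace.comap (a i) inferInstance ≤ ‹MeasurableSpace Ω› :=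
    iSup₂_le fun i _ => (hmeas i).comap_le
  have hpast : Measurable[⨆ i < n, MeasurableSpace.comap (a i) inferInstance]
      (s.indicator fun ω => ENNReal.ofReal (exp (q * ∑ i ∈ Finset.range n, a i ω))) :=
    (ENNReal.measurable_ofReal.comp (measurable_exp.comp
      ((measurable_iSup_lt_comap_sum_range a le_rfl).const_mul q))).indicator hs
  have hnow : Measurable[MeasurableSpace.comap (a n) inferInstance]
      fun ω => ENNReal.ofReal (exp (q * a n ω)) :=
    (by fun_prop : Measurable fun x : ℝ => ENNReal.ofReal (exp (q * x))).comp
      (comap_measurable (a n))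
  calc ∫⁻ ω in s, ENNReal.ofReal (exp (q * ∑ i ∈ Finset.range (n + 1), a i ω)) ∂μ
      = ∫⁻ ω, s.indicator (fun ω => ENNReal.ofReal (exp (q * ∑ i ∈ Finset.range n, a i ω))) ω
          * ENNReal.ofReal (exp (q * a n ω)) ∂μ := by
        rw [← lintegral_indicator (hle s hs)]
        congr with ω
        by_cases hω : ω ∈ s
        · simp only [Set.indicator_of_mem hω, Finset.sum_range_succ, mul_add, exp_add,
            ENNReal.ofReal_mul (exp_pos _).le]
        · simp [Set.indicator_of_notMem hω]
    _ = (∫⁻ ω in s, ENNReal.ofReal (exp (q * ∑ i ∈ Finset.range n, a i ω)) ∂μ)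
          * ∫⁻ ω, ENNReal.ofReal (exp (q * a n ω)) ∂μ := by
        rw [lintegral_mul_eq_lintegral_mul_lintegral_of_independent_measurableSpace hle
          (hmeas n).comap_le (hindep.indep_iSup_lt_comap hmeas n) hpast hnow,
          lintegral_indicator (hle s hs)]
    _ ≤ ∫⁻ ω in s, ENNReal.ofReal (exp (q * ∑ i ∈ Finset.range n, a i ω)) ∂μ :=
        mul_le_of_le_one_right' hM

theorem measure_exists_sum_range_gt_le [IsProbabilityMeasure μ] {a : ℕ → Ω → ℝ}
    (hmeas : ∀ i, Measurable (a i)) (hindep : iIndepFun a μ) {q : ℝ} (hq : 0 ≤ q)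
    (hM : ∀ i, ∫⁻ ω, ENNReal.ofReal (exp (q * a i ω)) ∂μ ≤ 1) (h : ℝ) :
    μ {ω | ∃ n, 1 ≤ n ∧ h < ∑ i ∈ Finset.range n, a i ω} ≤ ENNReal.ofReal (exp (-q * h)) := by
  set S : ℕ → Ω → ℝ := fun n ω => ∑ i ∈ Finset.range n, a i ω
  set C : ℕ → Set Ω := fun n => {ω | ∀ k < n, S (k + 1) ω ≤ h}
  have hCpast : ∀ n, MeasurableSet[⨆ i < n, MeasurableSpace.comap (a i) inferInstance] (C n) := by
    intro n
    simp only [C, Set.ofPred_forall]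
    exact .iInter fun k => .iInter fun hk =>
      measurableSet_le (measurable_iSup_lt_comap_sum_range a hk) measurable_const
  have hCm : ∀ n, MeasurableSet (C n) := fun n =>
    iSup₂_le (fun i _ => (hmeas i).comap_le) _ (hCpast n)
  have hC : Antitone C := fun m n hmn ω hω k hk => hω k (hk.trans_le hmn)
  have hexit : ∀ n, ∀ ω ∈ C n \ C (n + 1),
      ENNReal.ofReal (exp (q * h)) ≤ ENNReal.ofReal (exp (q * S (n + 1) ω)) := by
    rintro n ω ⟨hstay, hleave⟩
    have hcross : h < S (n + 1) ω := by
      by_contra! hle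
      exact hleave fun k hk => (Nat.lt_succ_iff_lt_or_eq.1 hk).elim (hstay k) (· ▸ hle)
    gcongr
  have hbound : ∀ N, ENNReal.ofReal (exp (q * h)) * μ (C N)ᶜ ≤ 1 := fun N => by
    have := mul_measure_compl_add_setLIntegral_le hC hCm
      (fun n => setLIntegral_exp_sum_range_succ_le hmeas hindep (hM n) (hCpast n)) hexit N
    refine le_self_add.trans (this.trans_eq ?_)
    simp [C, S]
  have hset : {ω | ∃ n, 1 ≤ n ∧ h < S n ω} = ⋃ N, (C N)ᶜ := by
    ext ω
    simp only [C, Set.mem_ofPred_eq, Set.mem_iUnion, Set.mem_compl_iff, not_forall, not_le]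
    constructor
    · rintro ⟨n, hn1, hn⟩
      obtain ⟨k, rfl⟩ := Nat.exists_eq_add_of_le' hn1
      exact ⟨k + 1, k, k.lt_succ_self, hn⟩
    · rintro ⟨-, k, -, hk⟩
      exact ⟨k + 1, k.succ_pos, hk⟩
  change μ {ω | ∃ n, 1 ≤ n ∧ h < S n ω} ≤ _
  have hmono : Monotone fun N => (C N)ᶜ := fun _ _ hmn => Set.compl_subset_compl.2 (hC hmn)
  rw [hset, hmono.measure_iUnion, neg_mul, exp_neg,
    ENNReal.ofReal_inv_of_pos (exp_pos _)]
  exact iSup_le fun N => ENNReal.le_inv_iff_mul_le.2 (by rw [mul_comm]; exact hbound N)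

end

theorem stmt0_general {Ω : Type*} [MeasurableSpace Ω] (μ : Measure Ω) [IsProbabilityMeasure μ]
    (a : ℕ → Ω → ℝ) (hmeas : ∀ i, Measurable (a i))
    (hindep : iIndepFun a μ)
    (hident : ∀ i, IdentDistrib (a i) (a 0) μ μ)
    (q : ℝ) (hq : 0 < q)
    (hint : Integrable (fun ω => Real.exp (q * a 0 ω)) μ)
    (hM : ∫ ω, Real.exp (q * a 0 ω) ∂μ ≤ 1)
    (h : ℝ) :
    μ {ω | ∃ n, 1 ≤ n ∧ h < ∑ i ∈ Finset.range n, a i ω}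
      ≤ ENNReal.ofReal (Real.exp (-q * h)) := by
  refine measure_exists_sum_range_gt_le hmeas hindep hq.le (fun i => ?_) h
  have hexp : Measurable fun x : ℝ => ENNReal.ofReal (exp (q * x)) := by fun_prop
  calc ∫⁻ ω, ENNReal.ofReal (exp (q * a i ω)) ∂μ
      = ∫⁻ ω, ENNReal.ofReal (exp (q * a 0 ω)) ∂μ := ((hident i).comp hexp).lintegral_eq
    _ = ENNReal.ofReal (∫ ω, exp (q * a 0 ω) ∂μ) :=
        (ofReal_integral_eq_lintegral_ofReal hint (.of_forall fun _ => (exp_pos _).le)).symm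
    _ ≤ 1 := ENNReal.ofReal_le_one.2 hM

/-- Exponential bound on the probability that a random walk with i.i.d. increments,
whose MGF at some `q > 0` is at most 1, ever exceeds level `h ≥ 0`. -/
theorem stmt0 {Ω : Type*} [MeasurableSpace Ω] (μ : Measure Ω) [IsProbabilityMeasure μ]
    (a : ℕ → Ω → ℝ) (hmeas : ∀ i, Measurable (a i))
    (hindep : iIndepFun a μ)
    (hident : ∀ i, IdentDistrib (a i) (a 0) μ μ)
    (q : ℝ) (hq : 0 < q)
    (hint : Integrable (fun ω => Real.exp (q * a 0 ω)) μ)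
    (hM : ∫ ω, Real.exp (q * a 0 ω) ∂μ ≤ 1)
    (h : ℝ) (hh : 0 ≤ h) :
    μ {ω | ∃ n, 1 ≤ n ∧ h < ∑ i ∈ Finset.range n, a i ω}
      ≤ ENNReal.ofReal (Real.exp (-q * h)) :=
  stmt0_general μ a hmeas hindep hident q hq hint hM h
end

section
/- Let Y be a real random variable with |Y| ≤ B almost surely, E[Y] = −δ where 0 < δ ≤ B/2. Then with q = (1/B)·log(1 + δ/B), one has q > 0 and E[exp(q·Y)] ≤ 1. -/
open MeasureTheory Real

/-- For a bounded random variable `|Y| ≤ B` with mean `-δ`, `0 < δ ≤ B/2`, the choice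
`q = log(1 + δ/B)/B` is positive and makes the MGF at `q` at most one. -/
theorem stmt8 {Ω : Type*} [MeasurableSpace Ω] (μ : Measure Ω) [IsProbabilityMeasure μ]
    (Y : Ω → ℝ) (hmeas : Measurable Y)
    (B δ : ℝ) (hB : 0 < B) (hδ0 : 0 < δ) (hδ : δ ≤ B / 2)
    (hbd : ∀ᵐ ω ∂μ, |Y ω| ≤ B)
    (hmean : ∫ ω, Y ω ∂μ = -δ) :
    0 < Real.log (1 + δ / B) / B
    ∧ ∫ ω, Real.exp ((Real.log (1 + δ / B) / B) * Y ω) ∂μ ≤ 1 := by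
  set q : ℝ := Real.log (1 + δ / B) / B with hq
  have hu : 0 < δ / B := div_pos hδ0 hB
  have h1u : (0:ℝ) < 1 + δ / B := by linarith
  have hlog : 0 < Real.log (1 + δ / B) := Real.log_pos (by linarith)
  have hqpos : 0 < q := div_pos hlog hB
  refine ⟨hqpos, ?_⟩
  have hBne : B ≠ 0 := ne_of_gt hB
  have hBδ : (0:ℝ) < B + δ := by linarith
  have hqB : q * B = Real.log (1 + δ / B) := by
    rw [hq]; field_simp
  have heb : Real.exp (q * B) = (B + δ) / B := by
    rw [hqB, Real.exp_log h1u]; field_simp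
  have hea : Real.exp (-(q * B)) = B / (B + δ) := by
    rw [Real.exp_neg, heb, inv_div]
  -- integrability of Y
  have hYint : Integrable Y μ := by
    refine (integrable_const B).mono' hmeas.aestronglyMeasurable ?_
    filter_upwards [hbd] with ω hω
    simpa using hω
  -- integrability of exp (q Y)
  have hEint : Integrable (fun ω => Real.exp (q * Y ω)) μ := by
    refine (integrable_const (Real.exp (q * B))).mono'
      (Real.measurable_exp.comp (hmeas.const_mul q)).aestronglyMeasurable ?_
    filter_upwards [hbd] with ω hω
    have h1 : Y ω ≤ B := (abs_le.mp hω).2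
    have h2 : q * Y ω ≤ q * B := mul_le_mul_of_nonneg_left h1 hqpos.le
    rw [Real.norm_eq_abs, abs_of_nonneg (Real.exp_pos _).le]
    exact Real.exp_le_exp.mpr h2
  -- pointwise chord bound
  have hpt : ∀ᵐ ω ∂μ, Real.exp (q * Y ω) ≤
      (Real.exp (-(q * B)) + Real.exp (q * B)) / 2
        + ((Real.exp (q * B) - Real.exp (-(q * B))) / (2 * B)) * Y ω := by
    filter_upwards [hbd] with ω hω
    obtain ⟨h1, h2⟩ := abs_le.mp hω
    have hl1 : (0:ℝ) ≤ (B - Y ω) / (2 * B) := by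
      apply div_nonneg <;> linarith
    have hl2 : (0:ℝ) ≤ (B + Y ω) / (2 * B) := by
      apply div_nonneg <;> linarith
    have hsum : (B - Y ω) / (2 * B) + (B + Y ω) / (2 * B) = 1 := by
      field_simp
      ring
    have hconv := convexOn_exp.2 (Set.mem_univ (-(q * B))) (Set.mem_univ (q * B))
      hl1 hl2 hsum
    simp only [smul_eq_mul] at hconv
    have hx : ∀ c : ℝ, (B - Y ω) / (2 * B) * (-(c * B)) + (B + Y ω) / (2 * B) * (c * B)
        = c * Y ω := by
      intro c; field_simp; ring
    rw [hx q] at hconv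
    refine hconv.trans_eq ?_
    field_simp
    ring
  -- integrate the bound
  have hrhsint : Integrable (fun ω =>
      (Real.exp (-(q * B)) + Real.exp (q * B)) / 2
        + ((Real.exp (q * B) - Real.exp (-(q * B))) / (2 * B)) * Y ω) μ :=
    (integrable_const _).add (hYint.const_mul _)
  have hint := integral_mono_ae hEint hrhsint hpt
  have hval : ∫ ω, ((Real.exp (-(q * B)) + Real.exp (q * B)) / 2
        + ((Real.exp (q * B) - Real.exp (-(q * B))) / (2 * B)) * Y ω) ∂μ
      = (Real.exp (-(q * B)) + Real.exp (q * B)) / 2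
        + ((Real.exp (q * B) - Real.exp (-(q * B))) / (2 * B)) * (-δ) := by
    rw [integral_add (integrable_const _) (hYint.const_mul _), integral_const,
      integral_const_mul, hmean]
    simp
  rw [hval, hea, heb] at hint
  refine hint.trans ?_
  have key : (B / (B + δ) + (B + δ) / B) / 2
      + ((B + δ) / B - B / (B + δ)) / (2 * B) * (-δ) = 1 - δ ^ 2 / (2 * B ^ 2) := by
    field_simp
    ring
  rw [key]
  have hpos : (0:ℝ) ≤ δ ^ 2 / (2 * B ^ 2) := by positivity
  linarith
end

section
/- Let {a_i} be i.i.d. real random variables with E[exp(a_1)] = 1 (e.g., a_i = log(f_1(x_i)/f_0(x_i)) with x_i ~ f_0). Define the CUSUM recursion Z_0 = 0, Z_n = max{0, Z_{n−1} + a_n}, and T = inf{n ≥ 1 : Z_n ≥ h}. Then E[T] ≥ exp(h). -/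
/-!
Write `A n` for the event `T > n` that no alarm has been raised by time `n`, and let `q n` be
`exp Z` at time `n` stopped at the alarm, its overshoot at the alarm capped to `exp h`.
Since `exp (max 0 x) ≤ exp x + 1`, where the `1` is only needed when the walk stays below `h`,
and `E[exp a] = 1` independently of the past, `E[q (n + 1)] ≤ E[q n] + P(A (n + 1))`.
As `q n ≥ 1` on `A n` and `q n = exp h` off it, this telescopes to
`exp h * (1 - P(A n)) ≤ ∑_{k < n} P(A k) ≤ E[T]`, and `P(A n) → 0` unless `E[T] = ∞`.
-/

open MeasureTheory ProbabilityTheory Real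
open scoped ENNReal

namespace Cusum

variable {Ω : Type*} {a Z : ℕ → Ω → ℝ} {h : ℝ}

lemma nonneg_of_recursion (hZ0 : ∀ ω, Z 0 ω = 0)
    (hZrec : ∀ n ω, Z (n + 1) ω = max 0 (Z n ω + a (n + 1) ω)) (n : ℕ) (ω : Ω) : 0 ≤ Z n ω := by
  cases n with
  | zero => exact (hZ0 ω).ge
  | succ n => exact (hZrec n ω).symm ▸ le_max_left _ _

theorem _root_.MeasureTheory.Adapted.cusum {m : MeasurableSpace Ω} {ℱ : Filtration ℕ m}
    (ha : Adapted ℱ a) (hZ0 : ∀ ω, Z 0 ω = 0)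
    (hZrec : ∀ n ω, Z (n + 1) ω = max 0 (Z n ω + a (n + 1) ω)) : Adapted ℱ Z := by
  intro n
  induction n with
  | zero => simpa only [funext hZ0] using measurable_const
  | succ n ih =>
    rw [funext (hZrec n)]
    exact measurable_const.max ((ih.mono (ℱ.mono n.le_succ) le_rfl).add (ha _))

def noAlarm (Z : ℕ → Ω → ℝ) (h : ℝ) (n : ℕ) : Set Ω := {ω | ∀ k ∈ Finset.Icc 1 n, Z k ω < h}

@[simp]
lemma noAlarm_zero : noAlarm Z h 0 = Set.univ := by
  simp [noAlarm]

lemma noAlarm_succ (n : ℕ) : noAlarm Z h (n + 1) = noAlarm Z h n ∩ {ω | Z (n + 1) ω < h} := by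
  ext ω
  simp only [noAlarm, Set.mem_ofPred_eq, Set.mem_inter_iff, Finset.mem_Icc]
  constructor
  · intro hω
    exact ⟨fun k hk => hω k ⟨hk.1, hk.2.trans n.le_succ⟩, hω _ ⟨n.succ_pos, le_rfl⟩⟩
  · rintro ⟨hω, hlast⟩ k ⟨hk1, hk⟩
    rcases hk.lt_or_eq with hk | rfl
    · exact hω k ⟨hk1, Nat.le_of_lt_succ hk⟩
    · exact hlast

lemma measurableSet_noAlarm {m : MeasurableSpace Ω} {n : ℕ}
    (hZ : ∀ k ≤ n, Measurable[m] (Z k)) : MeasurableSet[m] (noAlarm Z h n) := by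
  simp only [noAlarm, Set.ofPred_forall]
  exact .iInter fun k => .iInter fun hk =>
    measurableSet_lt (hZ k (Finset.mem_Icc.mp hk).2) measurable_const

lemma tsum_indicator_noAlarm_le (ω : Ω) :
    ∑' n, (noAlarm Z h n).indicator 1 ω ≤ sInf {t : ℝ≥0∞ | ∃ n : ℕ, 1 ≤ n ∧ t = n ∧ h ≤ Z n ω} := by
  refine le_sInf ?_
  rintro _ ⟨m, hm, rfl, hZm⟩
  have hvanish : ∀ n ∉ Finset.range m, (noAlarm Z h n).indicator (1 : Ω → ℝ≥0∞) ω = 0 := by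
    intro n hn
    refine Set.indicator_of_notMem (fun hω => ?_) _
    exact (hω m (Finset.mem_Icc.mpr ⟨hm, not_lt.mp (Finset.mem_range.not.mp hn)⟩)).not_ge hZm
  calc ∑' n, (noAlarm Z h n).indicator 1 ω
      = ∑ n ∈ Finset.range m, (noAlarm Z h n).indicator 1 ω := tsum_eq_sum hvanish
    _ ≤ ∑ n ∈ Finset.range m, 1 := Finset.sum_le_sum fun n _ => Set.indicator_le_self _ _ ω
    _ = m := by simp

lemma exp_max_zero_le (x : ℝ) (hh : 0 < h) :
    exp (max 0 x) ≤ exp x + if max 0 x < h then 1 else 0 := by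
  rcases le_total x 0 with hx | hx
  · rw [max_eq_left hx, if_pos hh]
    linarith [exp_pos x, exp_zero]
  · rw [max_eq_right hx]
    split_ifs <;> linarith [exp_pos x]

noncomputable def cappedExp (Z : ℕ → Ω → ℝ) (h : ℝ) (n : ℕ) : Ω → ℝ≥0∞ :=
  (noAlarm Z h n).indicator (fun ω => ENNReal.ofReal (exp (Z n ω)))
    + (noAlarm Z h n)ᶜ.indicator (fun _ => ENNReal.ofReal (exp h))

lemma cappedExp_succ_le (hh : 0 < h)
    (hZrec : ∀ n ω, Z (n + 1) ω = max 0 (Z n ω + a (n + 1) ω)) (n : ℕ) (ω : Ω) :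
    cappedExp Z h (n + 1) ω ≤
      (noAlarm Z h n).indicator (fun ω => ENNReal.ofReal (exp (Z n ω))) ω
          * ENNReal.ofReal (exp (a (n + 1) ω))
        + (noAlarm Z h (n + 1)).indicator 1 ω
        + (noAlarm Z h n)ᶜ.indicator (fun _ => ENNReal.ofReal (exp h)) ω := by
  have hstep := exp_max_zero_le (Z n ω + a (n + 1) ω) hh
  rw [← hZrec, exp_add] at hstep
  by_cases hn : ω ∈ noAlarm Z h n
  · have hmem : ω ∈ noAlarm Z h (n + 1) ↔ Z (n + 1) ω < h := by simp [noAlarm_succ, hn]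
    by_cases hn1 : Z (n + 1) ω < h
    · rw [if_pos hn1] at hstep
      simp only [cappedExp, Pi.add_apply, Set.indicator_of_mem (hmem.mpr hn1),
        Set.indicator_of_mem hn, Set.indicator_of_notMem (Set.notMem_compl_iff.mpr hn),
        Set.indicator_of_notMem (Set.notMem_compl_iff.mpr (hmem.mpr hn1)), Pi.one_apply, add_zero]
      rw [← ENNReal.ofReal_mul (exp_pos _).le, ← ENNReal.ofReal_one, ← ENNReal.ofReal_add
        (by positivity) zero_le_one]
      exact ENNReal.ofReal_le_ofReal hstep
    · rw [if_neg hn1, add_zero] at hstep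
      have hn1' : ω ∉ noAlarm Z h (n + 1) := mt hmem.mp hn1
      simp only [cappedExp, Pi.add_apply, Set.indicator_of_mem hn,
        Set.indicator_of_notMem hn1', Set.indicator_of_mem (Set.mem_compl hn1'),
        Set.indicator_of_notMem (Set.notMem_compl_iff.mpr hn), add_zero, zero_add]
      rw [← ENNReal.ofReal_mul (exp_pos _).le]
      exact ENNReal.ofReal_le_ofReal ((exp_le_exp.mpr (not_lt.mp hn1)).trans hstep)
  · have hn1 : ω ∉ noAlarm Z h (n + 1) := fun h' => hn ((noAlarm_succ n).subset h').1
    simp [cappedExp, hn, hn1]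

section Integrals

variable {m : MeasurableSpace Ω} {μ : Measure Ω} {ℱ : Filtration ℕ m}

lemma lintegral_cappedExp {n : ℕ} (hZ : Adapted ℱ Z) :
    ∫⁻ ω, cappedExp Z h n ω ∂μ
      = ∫⁻ ω, (noAlarm Z h n).indicator (fun ω => ENNReal.ofReal (exp (Z n ω))) ω ∂μ
        + ENNReal.ofReal (exp h) * μ (noAlarm Z h n)ᶜ := by
  have hA : MeasurableSet (noAlarm Z h n) :=
    measurableSet_noAlarm fun k _ => (hZ k).mono (ℱ.le k) le_rfl
  simp only [cappedExp, Pi.add_apply]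
  rw [lintegral_add_left (((hZ n).mono (ℱ.le n) le_rfl).exp.ennreal_ofReal.indicator hA),
    lintegral_indicator_const hA.compl]

lemma lintegral_cappedExp_succ_le (hh : 0 < h) (hZ : Adapted ℱ Z)
    (hZrec : ∀ n ω, Z (n + 1) ω = max 0 (Z n ω + a (n + 1) ω)) {n : ℕ}
    (ha : Measurable (a (n + 1))) (hind : Indep (ℱ n) (.comap (a (n + 1)) inferInstance) μ)
    (hexp : ∫⁻ ω, ENNReal.ofReal (exp (a (n + 1) ω)) ∂μ = 1) :
    ∫⁻ ω, cappedExp Z h (n + 1) ω ∂μ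
      ≤ ∫⁻ ω, cappedExp Z h n ω ∂μ + μ (noAlarm Z h (n + 1)) := by
  set A := noAlarm Z h n
  have hAF : MeasurableSet[ℱ n] A :=
    measurableSet_noAlarm fun k hk => (hZ k).mono (ℱ.mono hk) le_rfl
  have hA : MeasurableSet A := ℱ.le n _ hAF
  have hA' : MeasurableSet (noAlarm Z h (n + 1)) :=
    measurableSet_noAlarm fun k _ => (hZ k).mono (ℱ.le k) le_rfl
  have hfF : Measurable[ℱ n] (A.indicator fun ω => ENNReal.ofReal (exp (Z n ω))) :=
    (hZ n).exp.ennreal_ofReal.indicator hAF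
  have hg : Measurable[.comap (a (n + 1)) inferInstance]
      fun ω => ENNReal.ofReal (exp (a (n + 1) ω)) :=
    (comap_measurable _).exp.ennreal_ofReal
  have hfactor : ∫⁻ ω, A.indicator (fun ω => ENNReal.ofReal (exp (Z n ω))) ω
        * ENNReal.ofReal (exp (a (n + 1) ω)) ∂μ
      = ∫⁻ ω, A.indicator (fun ω => ENNReal.ofReal (exp (Z n ω))) ω ∂μ := by
    rw [lintegral_mul_eq_lintegral_mul_lintegral_of_independent_measurableSpace (ℱ.le n)
      ha.comap_le hind hfF hg, hexp, mul_one]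
  calc ∫⁻ ω, cappedExp Z h (n + 1) ω ∂μ
      ≤ ∫⁻ ω, A.indicator (fun ω => ENNReal.ofReal (exp (Z n ω))) ω
            * ENNReal.ofReal (exp (a (n + 1) ω))
          + (noAlarm Z h (n + 1)).indicator 1 ω
          + Aᶜ.indicator (fun _ => ENNReal.ofReal (exp h)) ω ∂μ :=
        lintegral_mono (cappedExp_succ_le hh hZrec n)
    _ = ∫⁻ ω, cappedExp Z h n ω ∂μ + μ (noAlarm Z h (n + 1)) := by
        rw [lintegral_add_right _ (measurable_const.indicator hA.compl),
          lintegral_add_right _ (measurable_one.indicator hA'),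
          lintegral_indicator_one hA', lintegral_indicator_const hA.compl, hfactor,
          lintegral_cappedExp hZ, add_right_comm]

lemma lintegral_cappedExp_le (hh : 0 < h) (hZ : Adapted ℱ Z) (hZ0 : ∀ ω, Z 0 ω = 0)
    (hZrec : ∀ n ω, Z (n + 1) ω = max 0 (Z n ω + a (n + 1) ω)) (ha : ∀ n, Measurable (a n))
    (hind : ∀ n, Indep (ℱ n) (.comap (a (n + 1)) inferInstance) μ)
    (hexp : ∀ n, ∫⁻ ω, ENNReal.ofReal (exp (a (n + 1) ω)) ∂μ = 1) (n : ℕ) :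
    ∫⁻ ω, cappedExp Z h n ω ∂μ ≤ ∑ k ∈ Finset.range (n + 1), μ (noAlarm Z h k) := by
  induction n with
  | zero => simp [cappedExp, hZ0]
  | succ n ih =>
    rw [Finset.sum_range_succ]
    exact (lintegral_cappedExp_succ_le hh hZ hZrec (ha _) (hind n) (hexp n)).trans
      (add_le_add_left ih _)

lemma measure_add_mul_measure_compl_le (hZ : Adapted ℱ Z) (hZ0 : ∀ ω, Z 0 ω = 0)
    (hZrec : ∀ n ω, Z (n + 1) ω = max 0 (Z n ω + a (n + 1) ω)) (n : ℕ) :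
    μ (noAlarm Z h n) + ENNReal.ofReal (exp h) * μ (noAlarm Z h n)ᶜ
      ≤ ∫⁻ ω, cappedExp Z h n ω ∂μ := by
  have hA : MeasurableSet (noAlarm Z h n) :=
    measurableSet_noAlarm fun k _ => (hZ k).mono (ℱ.le k) le_rfl
  rw [lintegral_cappedExp hZ, ← lintegral_indicator_one hA]
  gcongr with ω
  exact ENNReal.one_le_ofReal.mpr (one_le_exp (nonneg_of_recursion hZ0 hZrec n ω))

lemma mul_one_sub_measure_noAlarm_le [IsProbabilityMeasure μ] (hh : 0 < h)
    (hZ : Adapted ℱ Z) (hZ0 : ∀ ω, Z 0 ω = 0)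
    (hZrec : ∀ n ω, Z (n + 1) ω = max 0 (Z n ω + a (n + 1) ω)) (ha : ∀ n, Measurable (a n))
    (hind : ∀ n, Indep (ℱ n) (.comap (a (n + 1)) inferInstance) μ)
    (hexp : ∀ n, ∫⁻ ω, ENNReal.ofReal (exp (a (n + 1) ω)) ∂μ = 1) (n : ℕ) :
    ENNReal.ofReal (exp h) * (1 - μ (noAlarm Z h n))
      ≤ ∑ k ∈ Finset.range n, μ (noAlarm Z h k) := by
  have hA : MeasurableSet (noAlarm Z h n) :=
    measurableSet_noAlarm fun k _ => (hZ k).mono (ℱ.le k) le_rfl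
  have := (measure_add_mul_measure_compl_le hZ hZ0 hZrec n).trans
    (lintegral_cappedExp_le hh hZ hZ0 hZrec ha hind hexp n)
  rwa [Finset.sum_range_succ, add_comm _ (μ _), prob_compl_eq_one_sub hA,
    ENNReal.add_le_add_iff_left (measure_ne_top μ _)] at this

end Integrals

lemma le_tsum_of_mul_one_sub_le {f : ℕ → ℝ≥0∞} {c : ℝ≥0∞}
    (hf : ∀ n, c * (1 - f n) ≤ ∑ k ∈ Finset.range n, f k) : c ≤ ∑' k, f k := by
  by_cases htop : ∑' k, f k = ∞
  · exact htop ▸ le_top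
  have hlim : Filter.Tendsto (fun n => c * (1 - f n)) Filter.atTop (nhds (c * (1 - 0))) :=
    ENNReal.Tendsto.const_mul (ENNReal.Tendsto.sub tendsto_const_nhds
      (ENNReal.tendsto_atTop_zero_of_tsum_ne_top htop) (.inl ENNReal.one_ne_top))
      (.inl (by simp))
  rw [tsub_zero, mul_one] at hlim
  exact le_of_tendsto' hlim fun n => (hf n).trans (ENNReal.sum_le_tsum _)

theorem _root_.ProbabilityTheory.iIndepFun.indep_natural {β : Type*} [TopologicalSpace β]
    [TopologicalSpace.MetrizableSpace β] [MeasurableSpace β] [BorelSpace β] {m : MeasurableSpace Ω}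
    {μ : Measure Ω} {u : ℕ → Ω → β} (hum : ∀ i, StronglyMeasurable (u i)) (hu : iIndepFun u μ)
    {n k : ℕ} (hnk : n < k) :
    Indep (Filtration.natural u hum n) (.comap (u k) inferInstance) μ := by
  have hdisj : Disjoint (Set.Iic n) {k} := Set.disjoint_singleton_right.mpr (not_le.mpr hnk)
  exact indep_of_indep_of_le_right
    (indep_iSup_of_disjoint (fun i => (hum i).measurable.comap_le)
      ((iIndepFun_iff_iIndep _ _ _).mp hu) hdisj)
    (le_iSup₂_of_le k (Set.mem_singleton k) le_rfl)

lemma tsum_measure_noAlarm_le_lintegral {m : MeasurableSpace Ω} {μ : Measure Ω}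
    (hZ : ∀ k, Measurable (Z k)) :
    ∑' n, μ (noAlarm Z h n)
      ≤ ∫⁻ ω, sInf {t : ℝ≥0∞ | ∃ n : ℕ, 1 ≤ n ∧ t = n ∧ h ≤ Z n ω} ∂μ := by
  have hA (n : ℕ) : MeasurableSet (noAlarm Z h n) := measurableSet_noAlarm fun k _ => hZ k
  calc ∑' n, μ (noAlarm Z h n) = ∫⁻ ω, ∑' n, (noAlarm Z h n).indicator 1 ω ∂μ := by
        rw [lintegral_tsum fun n => (measurable_one.indicator (hA n)).aemeasurable]
        simp_rw [lintegral_indicator_one (hA _)]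
    _ ≤ _ := lintegral_mono tsum_indicator_noAlarm_le

end Cusum

open Cusum

/-- CUSUM false-alarm bound: if the i.i.d. increments satisfy `E[exp(a₁)] = 1`
(e.g. log-likelihood ratios under the pre-change law), then the CUSUM stopping time
`T = inf{n ≥ 1 : Z_n ≥ h}` satisfies `E[T] ≥ exp(h)`. -/
theorem stmt12 {Ω : Type*} [MeasurableSpace Ω] (μ : Measure Ω) [IsProbabilityMeasure μ]
    (a : ℕ → Ω → ℝ) (hmeas : ∀ i, Measurable (a i))
    (hindep : iIndepFun a μ)
    (hident : ∀ i, IdentDistrib (a i) (a 1) μ μ)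
    (hexp : Integrable (fun ω => Real.exp (a 1 ω)) μ)
    (hM : ∫ ω, Real.exp (a 1 ω) ∂μ = 1)
    (Z : ℕ → Ω → ℝ) (hZ0 : ∀ ω, Z 0 ω = 0)
    (hZrec : ∀ n ω, Z (n + 1) ω = max 0 (Z n ω + a (n + 1) ω))
    (h : ℝ) (hh : 0 ≤ h) :
    ENNReal.ofReal (Real.exp h)
      ≤ ∫⁻ ω, sInf {t : ℝ≥0∞ | ∃ n : ℕ, 1 ≤ n ∧ t = n ∧ h ≤ Z n ω} ∂μ := by
  rcases hh.eq_or_lt with rfl | hpos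
  · calc ENNReal.ofReal (exp 0) = ∫⁻ _, 1 ∂μ := by simp
      _ ≤ _ := lintegral_mono fun ω => le_sInf ?_
    rintro _ ⟨n, hn, rfl, -⟩
    exact_mod_cast hn
  set ℱ := Filtration.natural a fun i => (hmeas i).stronglyMeasurable
  have hZ : Adapted ℱ Z := (Filtration.stronglyAdapted_natural _).adapted.cusum hZ0 hZrec
  have hexp' (n : ℕ) : ∫⁻ ω, ENNReal.ofReal (exp (a (n + 1) ω)) ∂μ = 1 := by
    have hid := (hident (n + 1)).comp measurable_exp
    rw [← ofReal_integral_eq_lintegral_ofReal (f := fun ω => exp (a (n + 1) ω))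
      (hid.integrable_iff.mpr hexp) (ae_of_all _ fun _ => (exp_pos _).le), ← ENNReal.ofReal_one]
    exact congrArg ENNReal.ofReal (hid.integral_eq.trans hM)
  calc ENNReal.ofReal (exp h) ≤ ∑' n, μ (noAlarm Z h n) :=
        le_tsum_of_mul_one_sub_le (mul_one_sub_measure_noAlarm_le hpos hZ hZ0 hZrec hmeas
          (fun n => hindep.indep_natural _ n.lt_succ_self) hexp')
    _ ≤ _ := tsum_measure_noAlarm_le_lintegral fun k => (hZ k).mono (ℱ.le k) le_rfl
end

section
/- Under the assumptions of the KCUSUM and a post-change distribution p_1 with d_k(p_0,p_1)² > δ, where the increments g_δ(z_i) are i.i.d. with mean μ = d_k(p_0,p_1)² − δ > 0 and |g_δ(z)| ≤ 4‖k‖_∞, the expected first passage time c_1 = inf{n ≥ 1 : Σ_{i=1}^n g_δ(z_i) > h} satisfies E[c_1] ≤ h/(d_k(p_0,p_1)² − δ) + 4‖k‖_∞² / (d_k(p_0,p_1)² − δ)². -/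
/-!
Write `Sₙ = a₀ + ⋯ + aₙ₋₁` and `Bₙ = {S₁ ≤ h, …, Sₙ ≤ h} = {c₁ > n}`, so that
`E[c₁] = ∑ₙ P(Bₙ)`. The event `Bₙ` is determined by `a₀, …, aₙ₋₁`, hence independent of `aₙ`,
and `E[aₙ 1_{Bₙ}] = (D - δ) P(Bₙ)`. Summed over `n < N`, the left side is the expectation of the
walk stopped at `min(c₁, N)`; that walk is at most `h` before it crosses, and it crosses by a
single increment `≤ 2K`, so `(D - δ) ∑_{n<N} P(Bₙ) ≤ h + 2K`. Finally `D - δ ≤ 2K`, i.e.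
`2K/(D - δ) ≥ 1`, so `(h + 2K)/(D - δ) ≤ h/(D - δ) + (2K/(D - δ))²`.
-/

open MeasureTheory ProbabilityTheory Finset
open scoped ENNReal

lemma sInf_natCast_eq_tsum_indicator (P : ℕ → Prop) :
    sInf {t : ℝ≥0∞ | ∃ n : ℕ, t = n ∧ P n} = ∑' n, {n | ∀ j ≤ n, ¬ P j}.indicator 1 n := by
  classical
  by_cases hP : ∃ n, P n
  · have hInf : sInf {t : ℝ≥0∞ | ∃ n : ℕ, t = n ∧ P n} = Nat.find hP := by
      refine le_antisymm (sInf_le ⟨_, rfl, Nat.find_spec hP⟩) (le_sInf ?_)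
      rintro _ ⟨n, rfl, hn⟩
      exact_mod_cast Nat.find_min' hP hn
    simp_rw [hInf, ← Nat.lt_find_iff hP]
    rw [tsum_eq_sum (s := range (Nat.find hP)) (by simp),
      sum_congr rfl fun n hn =>
        Set.indicator_of_mem (s := {n | n < Nat.find hP}) (mem_range.mp hn) 1]
    simp
  · push Not at hP
    simp [hP]

lemma sum_before_crossing_eq {x : ℕ → ℝ} {h : ℝ} {N : ℕ}
    (hN : ∀ j ≤ N, ∑ l ∈ range j, x l ≤ h) :
    ∑ i ∈ range N, (if ∀ j ≤ i, ∑ l ∈ range j, x l ≤ h then x i else 0) =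
      ∑ i ∈ range N, x i :=
  sum_congr rfl fun i hi => if_pos fun j hj => hN j (by have := mem_range.mp hi; omega)

lemma sum_before_crossing_le {x : ℕ → ℝ} {c h : ℝ} (hx : ∀ i, x i ≤ c) (hhc : 0 ≤ h + c)
    (N : ℕ) :
    ∑ i ∈ range N, (if ∀ j ≤ i, ∑ l ∈ range j, x l ≤ h then x i else 0) ≤ h + c := by
  induction N with
  | zero => simpa using hhc
  | succ N ih =>
    rw [sum_range_succ]
    split_ifs with hN
    · rw [sum_before_crossing_eq hN]
      linarith [hN N le_rfl, hx N]
    · simpa using ih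

lemma measurableSet_forall_partialSum_le {Ω : Type*} {a : ℕ → Ω → ℝ} (h : ℝ) (i : ℕ) :
    MeasurableSet[⨆ j < i, MeasurableSpace.comap (a j) inferInstance]
      {ω | ∀ j ≤ i, ∑ l ∈ range j, a l ω ≤ h} := by
  have ha : ∀ l < i, Measurable[⨆ j < i, MeasurableSpace.comap (a j) inferInstance] (a l) :=
    fun l hl => Measurable.of_comap_le (le_iSup₂_of_le l hl le_rfl)
  simp only [Set.ofPred_forall]
  exact .iInter fun j => .iInter fun hj =>
    Finset.measurable_sum _ (fun l hl => ha l ((mem_range.mp hl).trans_le hj)) measurableSet_Iic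

section Probability

variable {Ω : Type*} [MeasurableSpace Ω] {μ : Measure Ω}

lemma lintegral_sInf_natCast_eq_tsum_measure (P : ℕ → Ω → Prop)
    (hP : ∀ n, MeasurableSet {ω | P n ω}) :
    ∫⁻ ω, sInf {t : ℝ≥0∞ | ∃ n : ℕ, t = n ∧ P n ω} ∂μ =
      ∑' n, μ {ω | ∀ j ≤ n, ¬ P j ω} := by
  have hB : ∀ n, MeasurableSet {ω | ∀ j ≤ n, ¬ P j ω} := fun n => by
    simp only [Set.ofPred_forall]
    exact .iInter fun j => .iInter fun _ => (hP j).compl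
  simp_rw [sInf_natCast_eq_tsum_indicator]
  -- the indicator of `{n | ∀ j ≤ n, ¬ P j ω}` at `n` and that of `{ω | ∀ j ≤ n, ¬ P j ω}` at `ω`
  -- are the same `if`
  change ∫⁻ ω, ∑' n, {ω | ∀ j ≤ n, ¬ P j ω}.indicator 1 ω ∂μ = _
  rw [lintegral_tsum fun n => (measurable_one.indicator (hB n)).aemeasurable]
  exact tsum_congr fun n => lintegral_indicator_one (hB n)

lemma tsum_measure_le_ofReal_div [IsFiniteMeasure μ] {s : ℕ → Set Ω} {m C : ℝ} (hm : 0 < m)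
    (hs : ∀ N, m * ∑ n ∈ range N, μ.real (s n) ≤ C) :
    ∑' n, μ (s n) ≤ ENNReal.ofReal (C / m) := by
  refine ENNReal.tsum_le_of_sum_range_le fun N => ?_
  rw [ENNReal.le_ofReal_iff_toReal_le
    (ENNReal.sum_ne_top.2 fun n _ => measure_ne_top μ _) (div_nonneg ?_ hm.le),
    ENNReal.toReal_sum fun n _ => measure_ne_top μ _]
  · exact (le_div_iff₀' hm).2 (hs N)
  · simpa using hs 0

variable {a : ℕ → Ω → ℝ}

lemma ProbabilityTheory.iIndepFun.integral_indicator_eq_measureReal_mul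
    (hindep : iIndepFun a μ) (hmeas : ∀ i, Measurable (a i)) {i : ℕ} {s : Set Ω}
    (hs : MeasurableSet[⨆ j < i, MeasurableSpace.comap (a j) inferInstance] s) :
    ∫ ω, s.indicator (a i) ω ∂μ = μ.real s * ∫ ω, a i ω ∂μ := by
  have hpast : Indep (⨆ j ∈ ({i} : Set ℕ), MeasurableSpace.comap (a j) inferInstance)
      (⨆ j < i, MeasurableSpace.comap (a j) inferInstance) μ :=
    indep_iSup_of_disjoint (fun j => (hmeas j).comap_le) hindep.iIndep (T := {j | j < i})
      (by simp)
  have hs' : MeasurableSet s := iSup₂_le (fun j _ => (hmeas j).comap_le) s hs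
  have hind : IndepFun (a i) (s.indicator (1 : Ω → ℝ)) μ := by
    rw [IndepFun_iff_Indep]
    exact indep_of_indep_of_le_left
      (indep_of_indep_of_le_right hpast (measurable_const.indicator hs).comap_le)
      (le_iSup₂_of_le i rfl le_rfl)
  calc ∫ ω, s.indicator (a i) ω ∂μ = ∫ ω, a i ω * s.indicator 1 ω ∂μ := by
        congr 1; ext ω; by_cases hω : ω ∈ s <;> simp [hω]
    _ = μ.real s * ∫ ω, a i ω ∂μ := by
        rw [hind.integral_fun_mul_eq_mul_integral (hmeas i).aestronglyMeasurable
          (measurable_const.indicator hs').aestronglyMeasurable, integral_indicator_one hs',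
          mul_comm]

lemma mul_sum_measureReal_forall_partialSum_le [IsProbabilityMeasure μ]
    (hindep : iIndepFun a μ) (hmeas : ∀ i, Measurable (a i)) (hint : ∀ i, Integrable (a i) μ)
    {m c h : ℝ} (hmean : ∀ i, ∫ ω, a i ω ∂μ = m) (hle : ∀ i, ∀ᵐ ω ∂μ, a i ω ≤ c)
    (hhc : 0 ≤ h + c) (N : ℕ) :
    m * ∑ n ∈ range N, μ.real {ω | ∀ j ≤ n, ∑ l ∈ range j, a l ω ≤ h} ≤ h + c := by
  set B := fun n => {ω | ∀ j ≤ n, ∑ l ∈ range j, a l ω ≤ h}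
  have hB : ∀ n, MeasurableSet (B n) := fun n =>
    iSup₂_le (fun j _ => (hmeas j).comap_le) _ (measurableSet_forall_partialSum_le h n)
  have hstopped : ∀ᵐ ω ∂μ, ∑ n ∈ range N, (B n).indicator (a n) ω ≤ h + c := by
    filter_upwards [ae_all_iff.2 hle] with ω hω
    simpa only [Set.indicator_apply, Set.mem_ofPred_eq, B] using
      sum_before_crossing_le (x := fun i => a i ω) hω hhc N
  calc m * ∑ n ∈ range N, μ.real (B n)
      = ∫ ω, ∑ n ∈ range N, (B n).indicator (a n) ω ∂μ := by
        rw [integral_finsetSum _ fun n _ => (hint n).indicator (hB n), mul_sum]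
        refine sum_congr rfl fun n _ => ?_
        rw [hindep.integral_indicator_eq_measureReal_mul hmeas
          (measurableSet_forall_partialSum_le h n), hmean, mul_comm]
    _ ≤ ∫ _, h + c ∂μ := integral_mono_ae
        (integrable_finsetSum _ fun n _ => (hint n).indicator (hB n)) (integrable_const _)
        hstopped
    _ = h + c := by simp

end Probability

theorem stmt15_general {Ω : Type*} [MeasurableSpace Ω] (μ : Measure Ω) [IsProbabilityMeasure μ]
    (a : ℕ → Ω → ℝ) (hmeas : ∀ i, Measurable (a i))
    (hindep : iIndepFun a μ)
    (hident : ∀ i, IdentDistrib (a i) (a 0) μ μ)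
    (K D δ : ℝ) (hδD : δ < D)
    (hpos : ∀ᵐ ω ∂μ, a 0 ω ≤ 2 * K)
    (hint : Integrable (a 0) μ)
    (hmean : ∫ ω, a 0 ω ∂μ = D - δ)
    (h : ℝ) (hh : 0 ≤ h) :
    ∫⁻ ω, sInf {t : ℝ≥0∞ |
        ∃ n : ℕ, 1 ≤ n ∧ t = n ∧ h < ∑ i ∈ Finset.range n, a i ω} ∂μ
      ≤ ENNReal.ofReal (h / (D - δ) + 4 * K ^ 2 / (D - δ) ^ 2) := by
  have hm : 0 < D - δ := sub_pos.mpr hδD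
  have hm2K : D - δ ≤ 2 * K := by
    simpa [hmean] using integral_mono_ae hint (integrable_const (2 * K)) hpos
  have hcross : ∀ ω, {t : ℝ≥0∞ | ∃ n : ℕ, 1 ≤ n ∧ t = n ∧ h < ∑ i ∈ range n, a i ω} =
      {t : ℝ≥0∞ | ∃ n : ℕ, t = n ∧ h < ∑ i ∈ range n, a i ω} := fun ω => by
    ext t
    refine ⟨fun ⟨n, _, hn⟩ => ⟨n, hn⟩, fun ⟨n, htn, hn⟩ => ⟨n, ?_, htn, hn⟩⟩
    rcases n with _ | n
    · simp only [range_zero, sum_empty] at hn; linarith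
    · omega
  simp_rw [hcross]
  rw [lintegral_sInf_natCast_eq_tsum_measure _ fun n =>
    measurableSet_lt measurable_const (Finset.measurable_sum _ fun i _ => hmeas i)]
  simp_rw [not_lt]
  have hratio : 1 ≤ 2 * K / (D - δ) := (one_le_div hm).2 hm2K
  calc _ ≤ ENNReal.ofReal ((h + 2 * K) / (D - δ)) :=
        tsum_measure_le_ofReal_div hm <| mul_sum_measureReal_forall_partialSum_le hindep hmeas
          (fun i => (hident i).integrable_iff.2 hint) (fun i => (hident i).integral_eq.trans hmean)
          (fun i => (hident i).symm.ae_mem_snd (t := Set.Iic (2 * K)) measurableSet_Iic hpos)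
          (by linarith)
    _ ≤ ENNReal.ofReal (h / (D - δ) + 4 * K ^ 2 / (D - δ) ^ 2) := ENNReal.ofReal_le_ofReal <| by
        calc (h + 2 * K) / (D - δ) = h / (D - δ) + 2 * K / (D - δ) := add_div _ _ _
          _ ≤ h / (D - δ) + (2 * K / (D - δ)) ^ 2 := by
            gcongr; exact le_self_pow₀ hratio two_ne_zero
          _ = h / (D - δ) + 4 * K ^ 2 / (D - δ) ^ 2 := by rw [div_pow, mul_pow]; norm_num

/-- KCUSUM delay bound: with i.i.d. post-change increments `g_δ(z_i)` of mean
`D - δ > 0` (where `D = d_k(p₀,p₁)²`), bounded by `|g_δ| ≤ 4‖k‖_∞` and with positive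
part at most `2‖k‖_∞`, the first passage time `c₁` over `h` satisfies
`E[c₁] ≤ h/(D - δ) + 4‖k‖_∞²/(D - δ)²`. -/
theorem stmt15 {Ω : Type*} [MeasurableSpace Ω] (μ : Measure Ω) [IsProbabilityMeasure μ]
    (a : ℕ → Ω → ℝ) (hmeas : ∀ i, Measurable (a i))
    (hindep : iIndepFun a μ)
    (hident : ∀ i, IdentDistrib (a i) (a 0) μ μ)
    (K D δ : ℝ) (hK : 0 ≤ K) (hδ0 : 0 < δ) (hδK : δ < 2 * K) (hδD : δ < D)
    (hbd : ∀ᵐ ω ∂μ, |a 0 ω| ≤ 4 * K)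
    (hpos : ∀ᵐ ω ∂μ, a 0 ω ≤ 2 * K)
    (hint : Integrable (a 0) μ)
    (hmean : ∫ ω, a 0 ω ∂μ = D - δ)
    (h : ℝ) (hh : 0 ≤ h) :
    ∫⁻ ω, sInf {t : ℝ≥0∞ |
        ∃ n : ℕ, 1 ≤ n ∧ t = n ∧ h < ∑ i ∈ Finset.range n, a i ω} ∂μ
      ≤ ENNReal.ofReal (h / (D - δ) + 4 * K ^ 2 / (D - δ) ^ 2) :=
  stmt15_general μ a hmeas hindep hident K D δ hδD hpos hint hmean h hh
end
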